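/- If real numbers h₂,…,h_{n-1},hₙ are all negative with h₂ < -1/2 and hₙ < -1/2, and h₁ := -(h₃+⋯+h_{n-1})/2 (so 0 < h₁), and additionally h₁ < 1/2, then (∑ᵢ hᵢ)² - ∑ᵢ hᵢ² > 1/2, where the sums run over i = 1,…,n with h₁ defined as above. -/

import Mathlib

/-! The indices split as `{1} ∪ {2} ∪ [3, n-1] ∪ {n}`. Writing `a = h 2`, `b = h n` and
`Q` for the sum of squares over the middle block, whose sum is `-2 h₁`, the quantity becomes
`2ab - 2h₁(a + b) - Q`. Since the middle terms share a sign, `Q ≤ (-2h₁)² = 4h₁²`, so it exceeds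
`2ab + 2h₁(-(a + b) - 2h₁)`; here `2ab > 1/2` and `-(a + b) > 1 > 2h₁ ≥ 0`. -/

open Finset

lemma sum_sq_le_sq_sum_of_nonpos {ι : Type*} {s : Finset ι} {f : ι → ℝ}
    (hf : ∀ i ∈ s, f i ≤ 0) : ∑ i ∈ s, f i ^ 2 ≤ (∑ i ∈ s, f i) ^ 2 := by
  simpa [sum_neg_distrib] using
    sum_sq_le_sq_sum_of_nonneg (s := s) (f := fun i ↦ -f i) fun i hi ↦ neg_nonneg.2 (hf i hi)

lemma sum_Icc_one_eq_add_sum_Icc_three_add {M : Type*} [AddCommMonoid M] {n : ℕ} (hn : 3 ≤ n)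
    (f : ℕ → M) :
    ∑ i ∈ Icc 1 n, f i = f 1 + f 2 + ∑ i ∈ Icc 3 (n - 1), f i + f n := by
  obtain ⟨m, rfl⟩ : ∃ m, n = m + 1 := ⟨n - 1, by omega⟩
  rw [sum_Icc_succ_top (by omega), Nat.add_sub_cancel,
    ← insert_Icc_add_one_left_eq_Icc (show 1 ≤ m by omega),
    ← insert_Icc_add_one_left_eq_Icc (show 1 + 1 ≤ m by omega),
    sum_insert (by simp), sum_insert (by simp)]
  simp only [Nat.reduceAdd, add_assoc]

lemma half_lt_sq_sum_sub_sum_sq {a b c Q : ℝ} (ha : a < -(1 / 2)) (hb : b < -(1 / 2))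
    (hc₀ : 0 ≤ c) (hc : c < 1 / 2) (hQ : Q ≤ 4 * c ^ 2) :
    1 / 2 < (c + a + -2 * c + b) ^ 2 - (c ^ 2 + a ^ 2 + Q + b ^ 2) := by
  nlinarith [mul_pos_of_neg_of_neg (by linarith : a + 1 / 2 < 0) (by linarith : b + 1 / 2 < 0), mul_nonneg hc₀ (by linarith : 0 ≤ -(a + b) - 2 * c)]

theorem stmt_2_general (n : ℕ) (hn : 3 ≤ n) (h : ℕ → ℝ)
    (hneg : ∀ i, 2 ≤ i → i ≤ n → h i < 0)
    (h2 : h 2 < -(1 / 2)) (hnn : h n < -(1 / 2))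
    (hdef : h 1 = -(∑ i ∈ Finset.Icc 3 (n - 1), h i) / 2)
    (h1lt : h 1 < 1 / 2) :
    1 / 2 < (∑ i ∈ Finset.Icc 1 n, h i) ^ 2 - ∑ i ∈ Finset.Icc 1 n, (h i) ^ 2 := by
  have hmid : ∀ i ∈ Icc 3 (n - 1), h i ≤ 0 := fun i hi ↦ by
    rw [mem_Icc] at hi
    exact (hneg i (by omega) (by omega)).le
  have hsum : ∑ i ∈ Icc 3 (n - 1), h i = -2 * h 1 := by rw [hdef]; ring
  have h1nonneg : 0 ≤ h 1 := by linarith [sum_nonpos hmid]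
  have hsq : ∑ i ∈ Icc 3 (n - 1), h i ^ 2 ≤ 4 * h 1 ^ 2 :=
    calc _ ≤ (∑ i ∈ Icc 3 (n - 1), h i) ^ 2 := sum_sq_le_sq_sum_of_nonpos hmid
      _ = 4 * h 1 ^ 2 := by rw [hsum]; ring
  rw [sum_Icc_one_eq_add_sum_Icc_three_add hn, sum_Icc_one_eq_add_sum_Icc_three_add hn, hsum]
  exact half_lt_sq_sum_sub_sum_sq h2 hnn h1nonneg h1lt hsq

/-- Key inequality in the proof that all late-time Hubble rates cannot be negative:
under the stated sign conditions, `(tr h)² - tr(h²) > 1/2`. -/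
theorem stmt_2 (n : ℕ) (hn : 3 ≤ n) (h : ℕ → ℝ)
    (hneg : ∀ i, 2 ≤ i → i ≤ n → h i < 0)
    (h2 : h 2 < -(1 / 2)) (hnn : h n < -(1 / 2))
    (hdef : h 1 = -(∑ i ∈ Finset.Icc 3 (n - 1), h i) / 2)
    (h1pos : 0 < h 1) (h1lt : h 1 < 1 / 2) :
    1 / 2 < (∑ i ∈ Finset.Icc 1 n, h i) ^ 2 - ∑ i ∈ Finset.Icc 1 n, (h i) ^ 2 :=
  stmt_2_general n hn h hneg h2 hnn hdef h1lt
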